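/- For positive integers m ≥ 3 and k, the odd girth of the helical graph H(m,1,k) equals 2k + 2⌈(2k−1)/(m−2)⌉ − 1. -/

import Mathlib

structure OGraph where
  V : Type
  Adj : V → V → Prop
  symm : ∀ u v, Adj u v → Adj v u

namespace OGraph

/-- There is a walk of length exactly `n` from `u` to `v`. -/
def walkLen (G : OGraph) : ℕ → G.V → G.V → Prop
  | 0, u, v => u = v
  | n+1, u, v => ∃ w, G.Adj u w ∧ G.walkLen n w v

theorem walkLen_concat (G : OGraph) : ∀ (n : ℕ) (u v w : G.V),
    G.walkLen n u v → G.Adj v w → G.walkLen (n+1) u w := by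
  intro n
  induction n with
  | zero =>
      intro u v w h hadj
      cases h
      exact ⟨w, hadj, rfl⟩
  | succ n ih =>
      rintro u v w ⟨x, hux, hxv⟩ hadj
      exact ⟨x, hux, ih x v w hxv hadj⟩

theorem walkLen_symm (G : OGraph) : ∀ (n : ℕ) (u v : G.V),
    G.walkLen n u v → G.walkLen n v u := by
  intro n
  induction n with
  | zero => intro u v h; exact h.symm
  | succ n ih =>
      rintro u v ⟨w, huw, hwv⟩
      exact G.walkLen_concat n v w u (ih w v hwv) (G.symm u w huw)

/-- The `k`-th power of a graph: same vertices, adjacency = existence of a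
walk of length exactly `k` (loops allowed). -/
def pow (G : OGraph) (k : ℕ) : OGraph where
  V := G.V
  Adj u v := G.walkLen k u v
  symm := G.walkLen_symm k

/-- Existence of a graph homomorphism. -/
def homTo (G H : OGraph) : Prop :=
  ∃ f : G.V → H.V, ∀ u v, G.Adj u v → H.Adj (f u) (f v)

/-- The `(2s+1)`-subdivision `S_{2s+1}(G)`: every edge is replaced by a path
of length `2s+1`.  Following the paper's notation, the ordered pair `(u,v)`
(with `u ~ v`) carries the `s` inner vertices `(uv)_1, …, (uv)_s`. -/
def subdiv (G : OGraph) (s : ℕ) : OGraph where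
  V := G.V ⊕ ({p : G.V × G.V // G.Adj p.1 p.2} × Fin s)
  Adj x y :=
    match x, y with
    | Sum.inl u, Sum.inl v => s = 0 ∧ G.Adj u v
    | Sum.inl u, Sum.inr (e, k) => u = e.1.2 ∧ (k : ℕ) = s - 1
    | Sum.inr (e, k), Sum.inl u => u = e.1.2 ∧ (k : ℕ) = s - 1
    | Sum.inr (e, k), Sum.inr (e', l) =>
        e'.1.1 = e.1.2 ∧ e'.1.2 = e.1.1 ∧
        ((k : ℕ) + (l : ℕ) + 2 = s ∨ (k : ℕ) + (l : ℕ) + 2 = s + 1)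
  symm := by
    rintro (u | ⟨e, k⟩) (v | ⟨e', l⟩) h
    · exact ⟨h.1, G.symm _ _ h.2⟩
    · exact h
    · exact h
    · obtain ⟨h1, h2, h3⟩ := h
      exact ⟨h2.symm, h1.symm, by omega⟩

/-- `q < og(G)`: the rational `q` is smaller than the odd girth of `G`
(the length of a shortest odd closed walk; vacuously true if `G` is bipartite). -/
def ltOddGirth (G : OGraph) (q : ℚ) : Prop :=
  ∀ n : ℕ, Odd n → (∃ v, G.walkLen n v v) → q < (n : ℚ)

/-- A graph is non-bipartite iff it contains an odd closed walk. -/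
def Nonbipartite (G : OGraph) : Prop :=
  ∃ (n : ℕ) (v : G.V), Odd n ∧ G.walkLen n v v

/-- The odd girth, as an extended natural number (`⊤` for bipartite graphs). -/
noncomputable def oddGirth (G : OGraph) : ℕ∞ :=
  sInf {N : ℕ∞ | ∃ n : ℕ, N = (n : ℕ∞) ∧ Odd n ∧ ∃ v, G.walkLen n v v}

/-- The complete graph on `m` vertices. -/
def completeGraph (m : ℕ) : OGraph :=
  ⟨Fin m, fun u v => u ≠ v, fun _ _ h => h.symm⟩

/-- The chromatic number: least `m` such that `G` maps homomorphically to `K_m`. -/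
noncomputable def chromatic (G : OGraph) : ℕ :=
  sInf {m : ℕ | G.homTo (completeGraph m)}

/-- The `i`-th power thickness
`θ_i(G) = sup { (2r+1)/(2s+1) | χ(G^{(2r+1)/(2s+1)}) ≤ χ(G)+i, (2r+1)/(2s+1) < og(G) }`. -/
noncomputable def powerThickness (G : OGraph) (i : ℤ) : ℝ :=
  sSup {x : ℝ | ∃ r s : ℕ, x = (2*(r:ℝ)+1)/(2*(s:ℝ)+1) ∧
    ((((G.subdiv s).pow (2*r+1)).chromatic : ℤ) ≤ (G.chromatic : ℤ) + i) ∧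
    G.ltOddGirth ((2*(r:ℚ)+1)/(2*(s:ℚ)+1))}

/-- The graph `H^{-1/(2r+1)}`. -/
def negPow (H : OGraph) (r : ℕ) : OGraph where
  V := {A : Fin (r+1) → Set H.V //
        (∃ v, A 0 = {v}) ∧
        ∀ i : Fin (r+1), (A i).Nonempty ∧ A i ⊆ {u | ∃ v ∈ A 0, H.walkLen i v u}}
  Adj A B :=
    (∀ i j : Fin (r+1), (j : ℕ) = (i : ℕ) + 1 → A.1 i ⊆ B.1 j ∧ B.1 i ⊆ A.1 j) ∧
    ∀ j : Fin (r+1), ∀ a ∈ A.1 j, ∀ b ∈ B.1 j, H.Adj a b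
  symm := by
    rintro A B ⟨h1, h2⟩
    exact ⟨fun i j hij => ⟨(h1 i j hij).2, (h1 i j hij).1⟩,
           fun j b hb a ha => H.symm _ _ (h2 j a ha b hb)⟩

/-- The circular complete graph `K_{n/d}`. -/
def circGraph (n d : ℕ) : OGraph where
  V := Fin n
  Adj u v := (d : ℤ) ≤ |(u : ℤ) - (v : ℤ)| ∧ |(u : ℤ) - (v : ℤ)| ≤ (n : ℤ) - d
  symm := by
    intro u v h
    rwa [abs_sub_comm]

/-- The circular chromatic number, as a real number. -/
noncomputable def circChrom (G : OGraph) : ℝ :=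
  sInf {x : ℝ | ∃ n d : ℕ, 0 < d ∧ 2 * d ≤ n ∧ Nat.gcd n d = 1 ∧
    x = (n : ℝ) / (d : ℝ) ∧ G.homTo (circGraph n d)}

/-- The cycle on `m` vertices. -/
def cycleGraph (m : ℕ) : OGraph :=
  ⟨ZMod m, fun i j => i = j + 1 ∨ j = i + 1, fun _ _ h => h.symm⟩

/-- Graph isomorphism. -/
def Isom (G H : OGraph) : Prop :=
  ∃ f : G.V ≃ H.V, ∀ u v, G.Adj u v ↔ H.Adj (f u) (f v)

/-- The helical graph `H(m,n,k)`. -/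
def helical (m n k : ℕ) : OGraph where
  V := {A : Fin k → Set (Fin m) //
        (∀ h : 0 < k, (A ⟨0, h⟩).ncard = n) ∧
        (∀ i, n ≤ (A i).ncard) ∧
        (∀ i : Fin k, ∀ h : (i : ℕ) + 1 < k, A i ∩ A ⟨(i : ℕ) + 1, h⟩ = ∅) ∧
        (∀ i : Fin k, ∀ h : (i : ℕ) + 2 < k, A i ⊆ A ⟨(i : ℕ) + 2, h⟩)}
  Adj A B :=
    (∀ i, A.1 i ∩ B.1 i = ∅) ∧
    (∀ i : Fin k, ∀ h : (i : ℕ) + 1 < k,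
      A.1 i ⊆ B.1 ⟨(i : ℕ) + 1, h⟩ ∧ B.1 i ⊆ A.1 ⟨(i : ℕ) + 1, h⟩)
  symm := by
    rintro A B ⟨h1, h2⟩
    refine ⟨fun i => ?_, fun i h => ⟨(h2 i h).2, (h2 i h).1⟩⟩
    rw [Set.inter_comm]
    exact h1 i

/-- A graph with chromatic number `k` is colorful if every proper `k`-coloring
admits a (nonempty) induced subgraph all of whose vertices see all `k` colors in
their closed neighborhood. -/
def Colorful (G : OGraph) : Prop :=
  ∀ c : G.V → Fin G.chromatic, (∀ u v, G.Adj u v → c u ≠ c v) →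
    ∃ S : Set G.V, S.Nonempty ∧
      ∀ v ∈ S, ∀ col : Fin G.chromatic,
        ∃ u ∈ S, (u = v ∨ G.Adj v u) ∧ c u = col

end OGraph

open OGraph

/-!
Every vertex `u` of `H(m,1,k)` carries a colour, the element of its singleton `A_1(u)`. Along a
walk of length `t` the set `A_j` is pushed into `A_{j+t}`, so the ends of an odd walk of length
at most `2k - 1` have disjoint first sets. Running an odd closed walk of length `L` around forever
therefore gives an `L`-periodic `m`-colouring of `ℕ` in which equal colours are never at odd
distance `< 2k`; in such a colouring a colour class has at most `q = (L + 1 - 2k) / 2` points per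
period, whence `L ≤ m q`, i.e. `q ≥ ⌈(2k - 1)/(m - 2)⌉`.

Conversely, if `g = 2k - 1 + 2c ≤ m c`, the colouring `κ x = ⌊((k + c) x mod g) / c⌋` of `ℤ`
separates points at odd distance `< 2k`, and the tuples `A_j(i) = κ {i - j, i - j + 2, …, i + j}`
are the vertices of a closed walk of length `g`.
-/

namespace OGraph

variable {G : OGraph}

theorem exists_walkLen_of_walkLen_add {s r : ℕ} {u v : G.V} (h : G.walkLen (s + r) u v) :
    ∃ w, G.walkLen s u w ∧ G.walkLen r w v := by
  induction s generalizing u with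
  | zero => exact ⟨u, rfl, by simpa using h⟩
  | succ s ih =>
    rw [Nat.add_right_comm] at h
    obtain ⟨x, hux, hxv⟩ := h
    obtain ⟨w, hxw, hwv⟩ := ih hxv
    exact ⟨w, ⟨x, hux, hxw⟩, hwv⟩

theorem walkLen_of_adj_succ (W : ℕ → G.V) (hW : ∀ i, G.Adj (W i) (W (i + 1))) (n i : ℕ) :
    G.walkLen n (W i) (W (i + n)) := by
  induction n generalizing i with
  | zero => rfl
  | succ n ih =>
    exact ⟨W (i + 1), hW i, by simpa [Nat.add_right_comm, Nat.add_assoc] using ih (i + 1)⟩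

theorem exists_seq_of_walkLen {n : ℕ} {u v : G.V} (h : G.walkLen n u v) :
    ∃ W : ℕ → G.V, W 0 = u ∧ W n = v ∧ ∀ i < n, G.Adj (W i) (W (i + 1)) := by
  induction n generalizing u with
  | zero => exact ⟨fun _ => u, rfl, h, by simp⟩
  | succ n ih =>
    obtain ⟨x, hux, hxv⟩ := h
    obtain ⟨W, hW0, hWn, hW⟩ := ih hxv
    refine ⟨fun i => if i = 0 then u else W (i - 1), by simp, by simpa using hWn, ?_⟩
    rintro (_ | i) hi
    · simpa [hW0] using hux
    · simpa using hW i (by omega)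

theorem exists_periodic_seq_of_walkLen_self {L : ℕ} (hL : 0 < L) {v : G.V}
    (h : G.walkLen L v v) :
    ∃ W : ℕ → G.V, (∀ i, G.Adj (W i) (W (i + 1))) ∧ ∀ i, W (i + L) = W i := by
  obtain ⟨W, hW0, hWL, hW⟩ := exists_seq_of_walkLen h
  refine ⟨fun i => W (i % L), fun i => ?_, fun i => by simp⟩
  have hi : i % L < L := Nat.mod_lt i hL
  show G.Adj (W (i % L)) (W ((i + 1) % L))
  rw [← Nat.mod_add_mod]
  rcases (show i % L + 1 < L ∨ i % L + 1 = L by omega) with hlt | heq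
  · simpa [Nat.mod_eq_of_lt hlt] using hW _ hi
  · simpa [heq, hW0, hWL] using hW _ hi

theorem oddGirth_eq {n : ℕ} (hn : Odd n) (hw : ∃ v, G.walkLen n v v)
    (hle : ∀ L, Odd L → (∃ v, G.walkLen L v v) → n ≤ L) : G.oddGirth = n :=
  le_antisymm (sInf_le ⟨n, rfl, hn, hw⟩) <| le_sInf <| by
    rintro _ ⟨L, rfl, hL, hw⟩
    exact_mod_cast hle L hL hw

end OGraph

section PeriodicColoring

open Finset

theorem span_bound_of_odd_gaps {k : ℕ} (hk : 1 ≤ k) (S : Finset ℕ)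
    (hS : ∀ x ∈ S, ∀ y ∈ S, x < y → Odd (y - x) → 2 * k ≤ y - x) {a b : ℕ} (ha : a ∈ S)
    (ha_le : ∀ x ∈ S, a ≤ x) (hb : b ∈ S) (hb_ge : ∀ x ∈ S, x ≤ b) :
    2 * #S ≤ b - a + 2 ∧ (Odd (b - a) → 2 * #S + 2 * k ≤ b - a + 3) := by
  induction S using Finset.induction_on_max generalizing b with
  | empty => simp at ha
  | insert c s hc ih =>
    have hbc : b = c := by
      rcases mem_insert.mp hb with hb | hb
      · exact hb
      · exact absurd (hc b hb) (not_lt.mpr (hb_ge c (mem_insert_self c s)))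
    subst hbc
    rcases s.eq_empty_or_nonempty with rfl | hs
    · obtain rfl : a = b := by simpa using ha
      simp
    have ha' : a ∈ s := by
      obtain ⟨x, hx⟩ := hs
      exact (mem_insert.mp ha).resolve_left fun h =>
        absurd (hc x hx) (not_lt.mpr (h ▸ ha_le x (mem_insert_of_mem hx)))
    have hS' : ∀ x ∈ s, ∀ y ∈ s, x < y → Odd (y - x) → 2 * k ≤ y - x :=
      fun x hx y hy => hS x (mem_insert_of_mem hx) y (mem_insert_of_mem hy)
    obtain ⟨ih₁, ih₂⟩ := ih hS' ha' (fun x hx => ha_le x (mem_insert_of_mem hx))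
      (s.max'_mem hs) (fun x hx => s.le_max' x hx)
    have hgap := hS _ (mem_insert_of_mem (s.max'_mem hs)) _ (mem_insert_self b s)
      (hc _ (s.max'_mem hs))
    have hcard : #(insert b s) = #s + 1 := card_insert_of_notMem fun h => lt_irrefl b (hc b h)
    have hmax := hc _ (s.max'_mem hs)
    have hamax := ha_le _ (mem_insert_of_mem (s.max'_mem hs))
    simp only [Nat.odd_iff] at ih₂ hgap ⊢
    omega

variable {α : Type*} {a : ℕ → α} {L k : ℕ}

theorem two_mul_card_fiber_add_le [DecidableEq α] (hk : 1 ≤ k) (hL : Odd L)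
    (hper : ∀ i, a (i + L) = a i)
    (hgap : ∀ i j, i < j → a i = a j → Odd (j - i) → 2 * k ≤ j - i) (x : α) :
    2 * #{i ∈ range L | a i = x} + 2 * k ≤ L + 1 := by
  set S := {i ∈ range L | a i = x}
  rcases S.eq_empty_or_nonempty with hS | hS
  · have := hgap 0 L hL.pos (by simpa using (hper 0).symm) (by simpa using hL)
    rw [hS, card_empty]
    omega
  have hmem : ∀ {i}, i ∈ S ↔ i < L ∧ a i = x := by simp [S]
  set i₀ := S.min' hS
  have hi₀ : i₀ < L ∧ a i₀ = x := hmem.mp (S.min'_mem hS)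
  -- Closing up the period: the first element of the class reappears at `i₀ + L`.
  have hT := span_bound_of_odd_gaps hk (insert (i₀ + L) S) ?_ (mem_insert_of_mem (S.min'_mem hS))
    ?_ (mem_insert_self _ S) ?_
  · rw [card_insert_of_notMem fun h => by have := (hmem.mp h).1; omega] at hT
    have := hT.2 (by rwa [Nat.add_sub_cancel_left])
    omega
  · have hcol : ∀ y ∈ insert (i₀ + L) S, a y = x := by
      intro y hy
      rcases mem_insert.mp hy with rfl | hy
      · rw [hper, hi₀.2]
      · exact (hmem.mp hy).2
    exact fun y hy z hz hyz => hgap y z hyz ((hcol y hy).trans (hcol z hz).symm)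
  · intro y hy
    rcases mem_insert.mp hy with rfl | hy
    · omega
    · exact S.min'_le y hy
  · intro y hy
    rcases mem_insert.mp hy with rfl | hy
    · rfl
    · have := (hmem.mp hy).1
      omega

theorem exists_eq_le_card_mul_of_periodic [Fintype α] (hk : 1 ≤ k) (hL : Odd L)
    (hper : ∀ i, a (i + L) = a i)
    (hgap : ∀ i j, i < j → a i = a j → Odd (j - i) → 2 * k ≤ j - i) :
    ∃ q, L = 2 * k - 1 + 2 * q ∧ L ≤ Fintype.card α * q := by
  classical
  have hfiber := two_mul_card_fiber_add_le hk hL hper hgap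
  have hsum : L = ∑ x : α, #{i ∈ range L | a i = x} := by
    simpa using card_eq_sum_card_fiberwise (f := a) (s := range L) (t := univ) (by simp)
  obtain ⟨q, hq⟩ : ∃ q, L + 1 = 2 * k + 2 * q := by
    have := hfiber (a 0)
    obtain ⟨r, hr⟩ := hL
    exact ⟨(L + 1 - 2 * k) / 2, by omega⟩
  refine ⟨q, by omega, ?_⟩
  have := calc 2 * L = ∑ x : α, 2 * #{i ∈ range L | a i = x} := by rw [← mul_sum, ← hsum]
    _ ≤ ∑ _x : α, 2 * q := sum_le_sum fun x _ => by have := hfiber x; omega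
    _ = 2 * (Fintype.card α * q) := by simp [mul_left_comm]
  omega

end PeriodicColoring

section CircularColoring

def SeparatesOddDistances {α : Type*} (k : ℕ) (κ : ℤ → α) : Prop :=
  ∀ x y, Odd (x - y) → |x - y| < 2 * (k : ℤ) → κ x ≠ κ y

/-- Multiplying by `k + c`, the inverse of `2` modulo `g = 2k - 1 + 2c`, sends an odd difference
`2t + 1 < 2k` to a residue in `[c, g - c]`, so the two points land in different blocks of
length `c`. -/
theorem mul_emod_ediv_ne {k c t x y : ℤ} (hc : 0 < c) (ht : 0 ≤ t) (htk : t < k)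
    (hxy : x - y = 2 * t + 1) :
    (k + c) * x % (2 * k - 1 + 2 * c) / c ≠ (k + c) * y % (2 * k - 1 + 2 * c) / c := by
  set g := 2 * k - 1 + 2 * c
  have hg : 0 < g := by omega
  set X := (k + c) * x % g
  set Y := (k + c) * y % g
  have hdvd : g ∣ X - Y - (t + k + c) := by
    refine ⟨t - (k + c) * x / g + (k + c) * y / g, ?_⟩
    obtain rfl : x = y + (2 * t + 1) := by omega
    simp only [X, Y, g, Int.emod_def]
    ring
  intro hXY
  have hX := Int.emod_add_mul_ediv X c
  have hY := Int.emod_add_mul_ediv Y c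
  have := Int.emod_lt_of_pos X hc
  have := Int.emod_lt_of_pos Y hc
  have := Int.emod_nonneg X hc.ne'
  have := Int.emod_nonneg Y hc.ne'
  rw [hXY] at hX
  have hD := Int.eq_zero_of_abs_lt_dvd hdvd (abs_lt.mpr ⟨by omega, by omega⟩)
  omega

/-- A homomorphism `C_g^{2k-1} → K_m` for `g = 2k - 1 + 2c`, lifted to `ℤ`. -/
theorem exists_periodic_coloring {m k c : ℕ} (hk : 1 ≤ k) (hc : 2 * k - 1 + 2 * c ≤ m * c) :
    ∃ κ : ℤ → Fin m, (∀ x, κ (x + (2 * k - 1 + 2 * c : ℕ)) = κ x) ∧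
      SeparatesOddDistances k κ := by
  have hc0 : 0 < c := Nat.pos_of_ne_zero fun h => by simp [h] at hc; omega
  set g : ℤ := 2 * (k : ℤ) - 1 + 2 * c
  have hg : ((2 * k - 1 + 2 * c : ℕ) : ℤ) = g := by
    push_cast [Nat.cast_sub (by omega : 1 ≤ 2 * k)]
    rfl
  set f : ℤ → ℤ := fun x => (k + c) * x % g / c
  have hf_nonneg : ∀ x, 0 ≤ f x := fun x =>
    Int.ediv_nonneg (Int.emod_nonneg _ (by omega)) (by omega)
  have hf_lt : ∀ x, f x < m := fun x => by
    rw [Int.ediv_lt_iff_lt_mul (by omega)]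
    have := Int.emod_lt_of_pos ((k + c) * x) (show 0 < g by omega)
    have : g ≤ m * c := by rw [← hg]; exact_mod_cast hc
    omega
  refine ⟨fun x => ⟨(f x).toNat, by have := hf_lt x; have := hf_nonneg x; omega⟩, fun x => ?_,
    fun x y hodd hxy => ?_⟩
  · simp only [hg, f, mul_add, Int.add_mul_emod_self_right]
  · intro heq
    have hfxy : f x = f y := by
      have : (f x).toNat = (f y).toNat := congrArg Fin.val heq
      have := hf_nonneg x
      have := hf_nonneg y
      omega
    obtain ⟨t, ht⟩ := hodd
    rcases le_or_gt 0 t with ht0 | ht0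
    · exact mul_emod_ediv_ne (by omega) ht0 (by rw [abs_lt] at hxy; omega) ht hfxy
    · exact mul_emod_ediv_ne (t := -t - 1) (by omega) (by omega)
        (by rw [abs_lt] at hxy; omega) (by omega) hfxy.symm

end CircularColoring

namespace OGraph.helical

variable {m n k : ℕ}

theorem subset_of_walkLen {t : ℕ} {u u' : (helical m n k).V} (h : (helical m n k).walkLen t u u')
    (j : ℕ) (hj : j + t < k) : u.1 ⟨j, by omega⟩ ⊆ u'.1 ⟨j + t, hj⟩ := by
  induction t generalizing u j with
  | zero => cases h; rfl
  | succ t ih =>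
    obtain ⟨w, huw, hwu'⟩ := h
    have hstep : u.1 ⟨j, by omega⟩ ⊆ w.1 ⟨j + 1, by omega⟩ :=
      (huw.2 ⟨j, by omega⟩ (show j + 1 < k by omega)).1
    simpa only [Nat.add_right_comm, Nat.add_assoc] using hstep.trans (ih hwu' (j + 1) (by omega))

/-- The middle edge of an odd walk of length `2t + 1` separates the `(j + t)`-th sets, into which
the `j`-th sets of both ends are pushed. -/
theorem disjoint_of_walkLen_odd {t : ℕ} {u u' : (helical m n k).V}
    (h : (helical m n k).walkLen (2 * t + 1) u u') (j : ℕ) (hj : j + t < k) :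
    Disjoint (u.1 ⟨j, by omega⟩) (u'.1 ⟨j, by omega⟩) := by
  rw [show 2 * t + 1 = t + (t + 1) by omega] at h
  obtain ⟨w, huw, w', hww', hw'u'⟩ := exists_walkLen_of_walkLen_add h
  have hu := subset_of_walkLen huw j hj
  have hu' := subset_of_walkLen ((helical m n k).walkLen_symm t _ _ hw'u') j hj
  exact (Set.disjoint_iff_inter_eq_empty.mpr (hww'.1 _)).mono hu hu'

theorem exists_eq_le_mul_of_walkLen_self (hk : 1 ≤ k) {L : ℕ} (hL : Odd L)
    {v : (helical m 1 k).V} (hv : (helical m 1 k).walkLen L v v) :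
    ∃ q, L = 2 * k - 1 + 2 * q ∧ L ≤ m * q := by
  have hne (u : (helical m 1 k).V) : (u.1 ⟨0, hk⟩).Nonempty :=
    Set.nonempty_of_ncard_ne_zero (by rw [u.2.1 hk]; exact one_ne_zero)
  choose col hcol using hne
  obtain ⟨W, hW, hper⟩ := exists_periodic_seq_of_walkLen_self hL.pos hv
  simpa using exists_eq_le_card_mul_of_periodic (a := col ∘ W) hk hL
    (fun i => congrArg col (hper i)) fun i j hij hcol_eq hodd => by
      by_contra! hlt
      obtain ⟨t, ht⟩ := hodd
      have hwalk := walkLen_of_adj_succ W hW (j - i) i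
      rw [Nat.add_sub_cancel' hij.le, ht] at hwalk
      have hj : col (W i) ∈ (W j).1 ⟨0, hk⟩ :=
        (show col (W i) = col (W j) from hcol_eq) ▸ hcol (W j)
      exact Set.disjoint_left.mp (disjoint_of_walkLen_odd hwalk 0 (by omega)) (hcol (W i)) hj

variable (κ : ℤ → Fin m)

def evenStepColors (b : ℤ) (j : ℕ) : Set (Fin m) := {z | ∃ r ≤ j, κ (b + 2 * r) = z}

theorem evenStepColors_zero (b : ℤ) : evenStepColors κ b 0 = {κ b} := by
  ext z
  simp [evenStepColors, eq_comm]

theorem evenStepColors_subset {b b' : ℤ} {j j' : ℕ} (s : ℕ) (hb : b = b' + 2 * s)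
    (hj : j + s ≤ j') : evenStepColors κ b j ⊆ evenStepColors κ b' j' := by
  rintro z ⟨r, hr, rfl⟩
  exact ⟨r + s, by omega, by rw [hb]; push_cast; ring_nf⟩

theorem evenStepColors_disjoint (hκ : SeparatesOddDistances k κ)
    {b b' d : ℤ} {j j' : ℕ} (hb : b = b' + d) (hodd : Odd d)
    (hnear : |d| + 2 * max j j' < 2 * (k : ℤ)) :
    Disjoint (evenStepColors κ b j) (evenStepColors κ b' j') := by
  rw [Set.disjoint_left]
  rintro z ⟨r, hr, rfl⟩ ⟨r', hr', h⟩
  refine hκ _ _ ?_ ?_ h.symm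
  · rw [show b + 2 * (r : ℤ) - (b' + 2 * r') = d + 2 * (r - r') by rw [hb]; ring]
    exact hodd.add_even (even_two_mul _)
  · have := le_abs_self d
    have := neg_abs_le d
    rw [abs_lt]
    constructor <;> omega

def coloringVertex (hκ : SeparatesOddDistances k κ) (i : ℤ) : (helical m 1 k).V :=
  ⟨fun j => evenStepColors κ (i - j) j, by
    refine ⟨fun _ => by simp [evenStepColors_zero], fun j => ?_, fun j hj => ?_, fun j hj => ?_⟩
    · exact (Set.ncard_pos (Set.toFinite _)).mpr ⟨_, 0, Nat.zero_le _, rfl⟩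
    · refine Set.disjoint_iff_inter_eq_empty.mp
        (evenStepColors_disjoint κ hκ (d := 1) (by push_cast; ring) odd_one ?_)
      simp only [abs_one] at hj ⊢
      omega
    · exact evenStepColors_subset κ 1 (by push_cast; ring) (by simp)⟩

theorem coloringVertex_adj (hκ : SeparatesOddDistances k κ) (i : ℤ) :
    (helical m 1 k).Adj (coloringVertex κ hκ i) (coloringVertex κ hκ (i + 1)) := by
  refine ⟨fun j => Set.disjoint_iff_inter_eq_empty.mp
      (evenStepColors_disjoint κ hκ (d := -1) (by ring) (by simp) ?_),
    fun j hj => ⟨evenStepColors_subset κ 0 (by push_cast; ring) (by simp),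
      evenStepColors_subset κ 1 (by push_cast; ring) (by simp)⟩⟩
  have := j.2
  simp only [abs_neg, abs_one, max_self]
  omega

theorem coloringVertex_add_period (hκ : SeparatesOddDistances k κ) {g : ℕ}
    (hper : ∀ x, κ (x + g) = κ x) (i : ℤ) :
    coloringVertex κ hκ (i + g) = coloringVertex κ hκ i := by
  apply Subtype.ext
  funext j
  ext z
  simp only [coloringVertex, evenStepColors, Set.mem_ofPred_eq]
  simp only [show ∀ r : ℕ, i + g - j + 2 * r = i - j + 2 * r + g by intro r; ring, hper]

theorem exists_walkLen_self_of_coloring (hκ : SeparatesOddDistances k κ) {g : ℕ}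
    (hper : ∀ x, κ (x + g) = κ x) :
    ∃ v, (helical m 1 k).walkLen g v v := by
  refine ⟨coloringVertex κ hκ 0, ?_⟩
  have := walkLen_of_adj_succ (fun n : ℕ => coloringVertex κ hκ n)
    (fun n => by simpa using coloringVertex_adj κ hκ n) g 0
  have hperiod := coloringVertex_add_period κ hκ hper 0
  rw [zero_add] at hperiod
  simpa [hperiod] using this

theorem exists_walkLen_self {c : ℕ} (hk : 1 ≤ k) (hc : 2 * k - 1 + 2 * c ≤ m * c) :
    ∃ v, (helical m 1 k).walkLen (2 * k - 1 + 2 * c) v v := by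
  obtain ⟨κ, hper, hκ⟩ := exists_periodic_coloring hk hc
  exact exists_walkLen_self_of_coloring κ hκ hper

end OGraph.helical

theorem toNat_ceil_le_iff {m k : ℕ} (hm : 3 ≤ m) (hk : 1 ≤ k) (q : ℕ) :
    (⌈(2 * (k : ℚ) - 1) / ((m : ℚ) - 2)⌉).toNat ≤ q ↔ 2 * k - 1 + 2 * q ≤ m * q := by
  have hm2 : (0 : ℚ) < m - 2 := by
    have : (3 : ℚ) ≤ m := by exact_mod_cast hm
    linarith
  rw [Int.toNat_le, Int.ceil_le, div_le_iff₀ hm2, ← Nat.cast_le (α := ℚ)]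
  push_cast [Nat.cast_sub (by omega : 1 ≤ 2 * k)]
  constructor <;> intro h <;> linarith

/-- For `m ≥ 3`, `k ≥ 1`, the odd girth of `H(m,1,k)` equals
`2k + 2⌈(2k-1)/(m-2)⌉ - 1`. -/
theorem oddGirth_helical (m k : ℕ) (hm : 3 ≤ m) (hk : 1 ≤ k) :
    (helical m 1 k).oddGirth =
      ((2 * k + 2 * (⌈(2 * (k : ℚ) - 1) / ((m : ℚ) - 2)⌉).toNat - 1 : ℕ) : ℕ∞) := by
  set c := (⌈(2 * (k : ℚ) - 1) / ((m : ℚ) - 2)⌉).toNat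
  have hc := toNat_ceil_le_iff hm hk
  rw [show 2 * k + 2 * c - 1 = 2 * k - 1 + 2 * c by omega]
  refine oddGirth_eq ⟨k - 1 + c, by omega⟩ (helical.exists_walkLen_self hk ((hc c).mp le_rfl)) ?_
  rintro L hL ⟨v, hv⟩
  obtain ⟨q, rfl, hq⟩ := helical.exists_eq_le_mul_of_walkLen_self hk hL hv
  have := (hc q).mpr (by omega)
  omega
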